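/- arXiv:1405.5802 — 4 statements merged into one kernel-verified Lean document; each statement's English description precedes it below -/
import Mathlib

section
/- Let J ≥ 2, 1 ≤ r ≤ s ≤ J − 1, let x, δ₁, δ₂ ∈ ℝ^p and α₁,…,α_{J−1} ∈ ℝ, and let π₁,…,π_J > 0 with Σ_{j=1}^{J} π_j = 1 satisfy π_j/π_J = exp(α_j + ⟨x, δ₁⟩) for 1 ≤ j ≤ r, π_j/π_J = exp(α_j + ⟨x, δ₂⟩) for r < j ≤ s, and π_j/π_J = exp(α_j) for s < j ≤ J − 1. Then, writing π_{Ω₁} = π₁ + ⋯ + π_r and π_{Ω₃} = π_{s+1} + ⋯ + π_J, one has π_{Ω₁}/π_{Ω₃} = exp(α₁′ + ⟨x, δ₁⟩) where α₁′ = log( (Σ_{j=1}^{r} exp α_j) / (1 + Σ_{j=s+1}^{J−1} exp α_j) ). -/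
/-- First-level (root) computation for the canonical (reference, logistic, Z_{r,s}) model:
the ratio of the aggregated probabilities of Ω₁ = {1,…,r} and Ω₃ = {s+1,…,J} is
`exp(α₁′ + ⟨x, δ₁⟩)` with `α₁′ = log((Σ_{j≤r} e^{α_j})/(1 + Σ_{s<j≤J−1} e^{α_j}))`. -/
theorem reference_logistic_blockZ_root_ratio
    (J p : ℕ) (hJ : 2 ≤ J) (r s : ℕ) (hr : 1 ≤ r) (hrs : r ≤ s) (hs : s ≤ J - 1)
    (x δ₁ δ₂ : Fin p → ℝ) (α : ℕ → ℝ) (π : ℕ → ℝ)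
    (hpos : ∀ j ∈ Finset.Icc 1 J, 0 < π j)
    (hsum : ∑ j ∈ Finset.Icc 1 J, π j = 1)
    (h1 : ∀ j, 1 ≤ j → j ≤ r → π j / π J = Real.exp (α j + ∑ i, x i * δ₁ i))
    (h2 : ∀ j, r < j → j ≤ s → π j / π J = Real.exp (α j + ∑ i, x i * δ₂ i))
    (h3 : ∀ j, s < j → j ≤ J - 1 → π j / π J = Real.exp (α j)) :
    (∑ j ∈ Finset.Icc 1 r, π j) / (∑ j ∈ Finset.Icc (s + 1) J, π j) =
      Real.exp
        (Real.log ((∑ j ∈ Finset.Icc 1 r, Real.exp (α j)) /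
            (1 + ∑ j ∈ Finset.Icc (s + 1) (J - 1), Real.exp (α j))) +
          ∑ i, x i * δ₁ i) := by
  obtain ⟨K, rfl⟩ : ∃ K, J = K + 1 := ⟨J - 1, by omega⟩
  simp only [Nat.add_sub_cancel] at hs h3 ⊢
  set t := ∑ i, x i * δ₁ i with ht
  have hπJ : 0 < π (K + 1) := hpos _ (Finset.mem_Icc.mpr ⟨by omega, le_rfl⟩)
  set N := ∑ j ∈ Finset.Icc 1 r, Real.exp (α j) with hN
  set D := 1 + ∑ j ∈ Finset.Icc (s + 1) K, Real.exp (α j) with hD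
  have hNpos : 0 < N :=
    Finset.sum_pos (fun j _ => Real.exp_pos _) ⟨1, Finset.mem_Icc.mpr ⟨le_rfl, hr⟩⟩
  have hDpos : 0 < D := by
    have : 0 ≤ ∑ j ∈ Finset.Icc (s + 1) K, Real.exp (α j) :=
      Finset.sum_nonneg fun j _ => (Real.exp_pos _).le
    rw [hD]; linarith
  have hnum : ∑ j ∈ Finset.Icc 1 r, π j = π (K + 1) * N * Real.exp t := by
    rw [hN, Finset.mul_sum, Finset.sum_mul]
    refine Finset.sum_congr rfl fun j hj => ?_
    obtain ⟨hj1, hj2⟩ := Finset.mem_Icc.mp hj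
    have h := h1 j hj1 hj2
    rw [div_eq_iff hπJ.ne'] at h
    rw [h, Real.exp_add]; ring
  have hden : ∑ j ∈ Finset.Icc (s + 1) (K + 1), π j = π (K + 1) * D := by
    rw [Finset.sum_Icc_succ_top (by omega : s + 1 ≤ K + 1), hD]
    have : ∑ j ∈ Finset.Icc (s + 1) K, π j
        = ∑ j ∈ Finset.Icc (s + 1) K, π (K + 1) * Real.exp (α j) := by
      refine Finset.sum_congr rfl fun j hj => ?_
      obtain ⟨hj1, hj2⟩ := Finset.mem_Icc.mp hj
      have h := h3 j (by omega) hj2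
      rw [div_eq_iff hπJ.ne'] at h
      rw [h]; ring
    rw [this, ← Finset.mul_sum]; ring
  rw [hnum, hden, Real.exp_add, Real.exp_log (div_pos hNpos hDpos)]
  field_simp
end

section
/- Let J ≥ 2. The adjacent ratio map, sending a probability vector (π₁,…,π_J) with all π_j > 0 and Σ π_j = 1 to (r₁,…,r_{J−1}) where r_j = π_j/(π_j + π_{j+1}), is a bijection onto the open cube (0,1)^{J−1}. -/
/-!
The ratio `π j / (π j + π (j+1))` only sees the quotient `π (j+1) / π j`, so two positive
vectors with the same adjacent ratios are proportional, and the normalisation `∑ π = 1` fixes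
the constant. Conversely, for `u ∈ (0,1)^{J-1}` the weights
`w k = ∏_{1 ≤ i < k} (1 - u i) * ∏_{k ≤ i < J} u i` satisfy `w j = C u j` and
`w (j+1) = C (1 - u j)` with a common factor `C > 0`, so `w / ∑ w` is a preimage of `u`.
-/

open Finset

noncomputable def adjRatio (π : ℕ → ℝ) (j : ℕ) : ℝ := π j / (π j + π (j + 1))

lemma mem_Icc_of_mem_Icc_sub_one {j J : ℕ} (hj : j ∈ Icc 1 (J - 1)) : j ∈ Icc 1 J := by
  simp only [mem_Icc] at hj ⊢; omega

lemma add_one_mem_Icc_of_mem_Icc_sub_one {j J : ℕ} (hj : j ∈ Icc 1 (J - 1)) :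
    j + 1 ∈ Icc 1 J := by
  simp only [mem_Icc] at hj ⊢; omega

lemma eq_apply_one_of_succ_eq {α : Type*} {g : ℕ → α} {J : ℕ}
    (h : ∀ j ∈ Icc 1 (J - 1), g (j + 1) = g j) : ∀ j ∈ Icc 1 J, g j = g 1 := by
  suffices ∀ j, 1 ≤ j → j ≤ J → g j = g 1 from
    fun j hj => this j (mem_Icc.1 hj).1 (mem_Icc.1 hj).2
  intro j h1
  induction j, h1 using Nat.le_induction with
  | base => exact fun _ => rfl
  | succ n hn ih =>
    intro hnJ
    rw [h n (mem_Icc.2 ⟨hn, by omega⟩), ih (by omega)]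

lemma eq_of_div_eq_const_of_sum_eq {ι : Type*} {s : Finset ι} {π π' : ι → ℝ} {c : ℝ}
    (hπ : ∀ j ∈ s, π j ≠ 0) (hc : ∀ j ∈ s, π' j / π j = c)
    (hsum : ∑ j ∈ s, π' j = ∑ j ∈ s, π j) (hsum_ne : ∑ j ∈ s, π j ≠ 0) :
    ∀ j ∈ s, π j = π' j := by
  have hprop : ∀ j ∈ s, π' j = c * π j := fun j hj => by
    rw [← hc j hj, div_mul_cancel₀ _ (hπ j hj)]
  have hc1 : c = 1 := by
    rw [sum_congr rfl hprop, ← mul_sum] at hsum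
    exact (mul_eq_right₀ hsum_ne).1 hsum
  intro j hj
  rw [hprop j hj, hc1, one_mul]

lemma adjRatio_mem_Ioo {π : ℕ → ℝ} {j : ℕ} (h : 0 < π j) (h' : 0 < π (j + 1)) :
    adjRatio π j ∈ Set.Ioo 0 1 :=
  ⟨by unfold adjRatio; positivity, (div_lt_one (by positivity)).2 (by linarith)⟩

lemma adjRatio_eq_iff {π π' : ℕ → ℝ} {j : ℕ} (h : 0 < π j) (h₁ : 0 < π (j + 1))
    (h' : 0 < π' j) (h₁' : 0 < π' (j + 1)) :
    adjRatio π j = adjRatio π' j ↔ π' (j + 1) / π (j + 1) = π' j / π j := by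
  unfold adjRatio
  rw [div_eq_div_iff (by positivity) (by positivity),
    div_eq_div_iff h₁.ne' h.ne']
  constructor <;> intro hcross <;> linarith

lemma adjRatio_div_const (π : ℕ → ℝ) (j : ℕ) {S : ℝ} (hS : S ≠ 0) :
    adjRatio (fun k => π k / S) j = adjRatio π j := by
  simp only [adjRatio]
  rw [← add_div, div_div_div_cancel_right₀ hS]

theorem eqOn_of_adjRatio_eq {J : ℕ} {π π' : ℕ → ℝ}
    (hπ : ∀ j ∈ Icc 1 J, 0 < π j) (hsum : ∑ j ∈ Icc 1 J, π j = 1)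
    (hπ' : ∀ j ∈ Icc 1 J, 0 < π' j) (hsum' : ∑ j ∈ Icc 1 J, π' j = 1)
    (h : ∀ j ∈ Icc 1 (J - 1), adjRatio π j = adjRatio π' j) :
    ∀ j ∈ Icc 1 J, π j = π' j := by
  have hstep : ∀ j ∈ Icc 1 (J - 1), π' (j + 1) / π (j + 1) = π' j / π j := fun j hj => by
    have hj₀ := mem_Icc_of_mem_Icc_sub_one hj
    have hj₁ := add_one_mem_Icc_of_mem_Icc_sub_one hj
    exact (adjRatio_eq_iff (hπ j hj₀) (hπ _ hj₁) (hπ' j hj₀) (hπ' _ hj₁)).1 (h j hj)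
  exact eq_of_div_eq_const_of_sum_eq (fun j hj => (hπ j hj).ne')
    (eq_apply_one_of_succ_eq (g := fun j => π' j / π j) hstep) (hsum'.trans hsum.symm)
    (hsum ▸ one_ne_zero)

def stickWeight (u : ℕ → ℝ) (J k : ℕ) : ℝ :=
  (∏ i ∈ Ico 1 k, (1 - u i)) * ∏ i ∈ Ico k J, u i

section stickWeight

variable {u : ℕ → ℝ} {J : ℕ}

lemma stickWeight_pos (hu : ∀ i ∈ Ico 1 J, 0 < u i ∧ u i < 1) {k : ℕ} (hk : k ∈ Icc 1 J) :
    0 < stickWeight u J k := by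
  obtain ⟨hk1, hkJ⟩ := mem_Icc.1 hk
  refine mul_pos (prod_pos fun i hi => ?_) (prod_pos fun i hi => ?_)
  · exact sub_pos.2 (hu i (by simp only [mem_Ico] at hi ⊢; omega)).2
  · exact (hu i (by simp only [mem_Ico] at hi ⊢; omega)).1

lemma stickWeight_of_lt {j : ℕ} (hj : j < J) :
    stickWeight u J j = (∏ i ∈ Ico 1 j, (1 - u i)) * (u j * ∏ i ∈ Ico (j + 1) J, u i) := by
  rw [stickWeight, prod_eq_prod_Ico_succ_bot hj]

lemma stickWeight_add_one {j : ℕ} (hj : 1 ≤ j) :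
    stickWeight u J (j + 1) =
      (∏ i ∈ Ico 1 j, (1 - u i)) * (1 - u j) * ∏ i ∈ Ico (j + 1) J, u i := by
  rw [stickWeight, prod_Ico_succ_top hj]

lemma adjRatio_stickWeight (hu : ∀ i ∈ Ico 1 J, 0 < u i ∧ u i < 1) {j : ℕ}
    (hj : j ∈ Icc 1 (J - 1)) : adjRatio (stickWeight u J) j = u j := by
  obtain ⟨hj1, hjJ⟩ := mem_Icc.1 hj
  have hA : (∏ i ∈ Ico 1 j, (1 - u i)) ≠ 0 := (prod_pos fun i hi =>
    sub_pos.2 (hu i (by simp only [mem_Ico] at hi ⊢; omega)).2).ne'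
  have hB : (∏ i ∈ Ico (j + 1) J, u i) ≠ 0 := (prod_pos fun i hi =>
    (hu i (by simp only [mem_Ico] at hi ⊢; omega)).1).ne'
  rw [adjRatio, stickWeight_of_lt (by omega), stickWeight_add_one hj1]
  field_simp
  ring

end stickWeight

theorem exists_adjRatio_eq {J : ℕ} (hJ : 1 ≤ J) {u : ℕ → ℝ}
    (hu : ∀ j ∈ Icc 1 (J - 1), 0 < u j ∧ u j < 1) :
    ∃ π : ℕ → ℝ, (∀ j ∈ Icc 1 J, 0 < π j) ∧ ∑ j ∈ Icc 1 J, π j = 1 ∧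
      ∀ j ∈ Icc 1 (J - 1), adjRatio π j = u j := by
  have hu' : ∀ i ∈ Ico 1 J, 0 < u i ∧ u i < 1 := fun i hi =>
    hu i (by simp only [mem_Ico, mem_Icc] at hi ⊢; omega)
  set S := ∑ k ∈ Icc 1 J, stickWeight u J k
  have hS : 0 < S := sum_pos (fun k hk => stickWeight_pos hu' hk) ⟨1, mem_Icc.2 ⟨le_rfl, hJ⟩⟩
  refine ⟨fun k => stickWeight u J k / S, fun k hk => div_pos (stickWeight_pos hu' hk) hS,
    by rw [← sum_div, div_self hS.ne'], fun j hj => ?_⟩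
  rw [adjRatio_div_const _ _ hS.ne', adjRatio_stickWeight hu' hj]

/-- The adjacent ratio map `π ↦ (π_j/(π_j+π_{j+1}))_{j=1,…,J−1}` is a bijection from the
positive probability vectors on `{1,…,J}` onto the open cube `(0,1)^{J−1}`: it maps into
the cube, is injective, and is surjective onto the cube. -/
theorem adjacent_ratio_bijection (J : ℕ) (hJ : 2 ≤ J) :
    -- maps into the open cube
    (∀ π : ℕ → ℝ, (∀ j ∈ Finset.Icc 1 J, 0 < π j) → (∑ j ∈ Finset.Icc 1 J, π j = 1) →
      ∀ j ∈ Finset.Icc 1 (J - 1),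
        0 < π j / (π j + π (j + 1)) ∧ π j / (π j + π (j + 1)) < 1) ∧
    -- injective on positive probability vectors
    (∀ π π' : ℕ → ℝ,
      (∀ j ∈ Finset.Icc 1 J, 0 < π j) → (∑ j ∈ Finset.Icc 1 J, π j = 1) →
      (∀ j ∈ Finset.Icc 1 J, 0 < π' j) → (∑ j ∈ Finset.Icc 1 J, π' j = 1) →
      (∀ j ∈ Finset.Icc 1 (J - 1),
        π j / (π j + π (j + 1)) = π' j / (π' j + π' (j + 1))) →
      ∀ j ∈ Finset.Icc 1 J, π j = π' j) ∧
    -- surjective onto the open cube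
    (∀ u : ℕ → ℝ, (∀ j ∈ Finset.Icc 1 (J - 1), 0 < u j ∧ u j < 1) →
      ∃ π : ℕ → ℝ, (∀ j ∈ Finset.Icc 1 J, 0 < π j) ∧ (∑ j ∈ Finset.Icc 1 J, π j = 1) ∧
        ∀ j ∈ Finset.Icc 1 (J - 1), π j / (π j + π (j + 1)) = u j) := by
  refine ⟨fun π hπ _ j hj => ?_, fun π π' hπ hsum hπ' hsum' h => ?_,
    fun u hu => exists_adjRatio_eq (by omega) hu⟩
  · exact adjRatio_mem_Ioo (hπ j (mem_Icc_of_mem_Icc_sub_one hj))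
      (hπ _ (add_one_mem_Icc_of_mem_Icc_sub_one hj))
  · exact eqOn_of_adjRatio_eq hπ hsum hπ' hsum' h
end

section
/- Let F : ℝ → ℝ be the Gumbel max cumulative distribution function, F(t) = exp(−exp(−t)). Then both t ↦ log F(t) and t ↦ log(1 − F(t)) are strictly concave on ℝ. -/
/-! With `u = exp (-t)`, which decreases in `t`, the derivative of `log F = -u` is `u`, and the
derivative of `log (1 - F)` is `-u / (exp u - 1)`, minus the reciprocal of the slope of the secant
of `exp` between `0` and `u`. That slope increases with `u` because `exp` is strictly convex, so
both derivatives are strictly decreasing in `t`. -/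

open Real Set

lemma strictAntiOn_div_exp_sub_one : StrictAntiOn (fun u : ℝ => u / (exp u - 1)) (Ioi 0) := by
  intro x (hx : 0 < x) y (hy : 0 < y) hxy
  have hslope : (exp x - 1) / x < (exp y - 1) / y := by
    simpa using strictConvexOn_exp.secant_strict_mono (mem_univ 0) (mem_univ x) (mem_univ y)
      hx.ne' hy.ne' hxy
  have hpos : 0 < (exp x - 1) / x := div_pos (by simpa using hx) hx
  simpa only [inv_div] using (inv_lt_inv₀ (hpos.trans hslope) hpos).2 hslope

lemma hasDerivAt_neg_exp_neg (t : ℝ) : HasDerivAt (fun t => -exp (-t)) (exp (-t)) t := by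
  have h : HasDerivAt (fun t => -exp (-t)) _ t := (hasDerivAt_neg t).exp.neg
  simpa using h

lemma hasDerivAt_log_one_sub_exp_neg_exp_neg (t : ℝ) :
    HasDerivAt (fun t => log (1 - exp (-exp (-t)))) (-(exp (-t) / (exp (exp (-t)) - 1))) t := by
  have hF_lt_one : exp (-exp (-t)) < 1 := exp_lt_one_iff.2 (neg_neg_iff_pos.2 (exp_pos _))
  have hE_gt_one : 1 < exp (exp (-t)) := one_lt_exp_iff.2 (exp_pos _)
  convert (((hasDerivAt_neg_exp_neg t).exp).const_sub 1).log (sub_pos.2 hF_lt_one).ne' using 1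
  rw [exp_neg (exp (-t))]
  field_simp [(sub_pos.2 hE_gt_one).ne']

/-- For the Gumbel max cdf `F(t) = exp(−exp(−t))`, both `log F` and `log (1 − F)` are
strictly concave on `ℝ`. -/
theorem gumbel_max_log_cdf_strictly_concave :
    StrictConcaveOn ℝ Set.univ
      (fun t : ℝ => Real.log (Real.exp (-Real.exp (-t)))) ∧
    StrictConcaveOn ℝ Set.univ
      (fun t : ℝ => Real.log (1 - Real.exp (-Real.exp (-t)))) := by
  constructor
  · simp only [log_exp]
    refine StrictAnti.strictConcaveOn_univ_of_deriv (by fun_prop) ?_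
    rw [funext fun t => (hasDerivAt_neg_exp_neg t).deriv]
    exact exp_strictMono.comp_strictAnti fun _ _ => neg_lt_neg
  · have hderiv := hasDerivAt_log_one_sub_exp_neg_exp_neg
    refine StrictAnti.strictConcaveOn_univ_of_deriv
      (continuous_iff_continuousAt.2 fun t => (hderiv t).continuousAt) ?_
    rw [funext fun t => (hderiv t).deriv]
    intro s t hst
    exact neg_lt_neg <| strictAntiOn_div_exp_sub_one (exp_pos _) (exp_pos _)
      (exp_lt_exp.2 (neg_lt_neg hst))
end

section
/- Let Φ : ℝ → ℝ be the standard normal cumulative distribution function, Φ(x) = (1/√(2π)) ∫_{−∞}^{x} exp(−t²/2) dt. Then both x ↦ log Φ(x) and x ↦ log(1 − Φ(x)) are strictly concave on ℝ. -/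
/-!
With `φ = Φ'` we have `(log Φ)'' = (φ' Φ - φ²) / Φ²` and `φ'(x) = -x φ(x)`, so strict concavity
of `log Φ` reduces to the Mills-type inequality `-x Φ(x) < φ(x)`, which holds because
`φ(x) + x Φ(x) = ∫_{-∞}^x (x - t) φ(t) dt > 0`. The second function is `x ↦ log Φ(-x)`, as
`Φ(-x) = 1 - Φ(x)`.
-/

open Real MeasureTheory Set

theorem setIntegral_pos_of_forall_pos {X : Type*} [MeasurableSpace X] {μ : Measure X}
    {s : Set X} {f : X → ℝ} (hs : MeasurableSet s) (hμs : μ s ≠ 0) (hf : IntegrableOn f s μ)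
    (hpos : ∀ x ∈ s, 0 < f x) : 0 < ∫ x in s, f x ∂μ := by
  have hnonneg : 0 ≤ᵐ[μ.restrict s] f :=
    (ae_restrict_iff' hs).2 (ae_of_all _ fun x hx => (hpos x hx).le)
  rwa [setIntegral_pos_iff_support_of_nonneg_ae hnonneg hf,
    inter_eq_right.2 fun x hx => Function.mem_support.2 (hpos x hx).ne', pos_iff_ne_zero]

theorem hasDerivAt_integral_Iic {E : Type*} [NormedAddCommGroup E] [NormedSpace ℝ E]
    [CompleteSpace E] {f : ℝ → E} (hf : Integrable f) (hcont : Continuous f) (x : ℝ) :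
    HasDerivAt (fun y => ∫ t in Iic y, f t) (f x) x := by
  have hsplit : (fun y => ∫ t in Iic y, f t) = fun y => (∫ t in Iic 0, f t) + ∫ t in 0..y, f t := by
    ext y
    rw [← intervalIntegral.integral_Iic_sub_Iic hf.integrableOn hf.integrableOn]
    abel
  rw [hsplit]
  exact (intervalIntegral.integral_hasDerivAt_right hf.intervalIntegrable
    (hcont.stronglyMeasurableAtFilter _ _) hcont.continuousAt).const_add _

theorem StrictConcaveOn.comp_neg {𝕜 E β : Type*} [Ring 𝕜] [PartialOrder 𝕜] [AddCommGroup E]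
    [Module 𝕜 E] [AddCommMonoid β] [PartialOrder β] [SMul 𝕜 β] {f : E → β}
    (hf : StrictConcaveOn 𝕜 univ f) : StrictConcaveOn 𝕜 univ fun x => f (-x) := by
  refine ⟨convex_univ, fun a _ b _ hab s t hs ht hst => ?_⟩
  simpa only [smul_neg, neg_add] using
    hf.2 (mem_univ (-a)) (mem_univ (-b)) (neg_injective.ne hab) hs ht hst

theorem strictConcaveOn_univ_log_of_hasDerivAt {F f f' : ℝ → ℝ} (hpos : ∀ x, 0 < F x)
    (hF : ∀ x, HasDerivAt F (f x) x) (hf : ∀ x, HasDerivAt f (f' x) x)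
    (hlt : ∀ x, f' x * F x < f x ^ 2) : StrictConcaveOn ℝ univ fun x => log (F x) := by
  have hlog (x : ℝ) : HasDerivAt (fun y => log (F y)) (f x / F x) x :=
    (hF x).log (hpos x).ne'
  have hderiv : deriv (fun y => log (F y)) = fun x => f x / F x := funext fun x => (hlog x).deriv
  refine strictConcaveOn_univ_of_deriv2_neg
    (continuous_iff_continuousAt.2 fun x => (hlog x).continuousAt) fun x => ?_
  have hquot : HasDerivAt (fun y => f y / F y) ((f' x * F x - f x * f x) / F x ^ 2) x :=
    (hf x).div (hF x) (hpos x).ne'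
  rw [Function.iterate_succ_apply, Function.iterate_one, hderiv, hquot.deriv]
  exact div_neg_of_neg_of_pos (by nlinarith [hlt x]) (pow_pos (hpos x) 2)

theorem integrable_exp_neg_sq_div_two : Integrable fun t : ℝ => exp (-t ^ 2 / 2) := by
  simpa [neg_div, div_eq_inv_mul] using integrable_exp_neg_mul_sq (b := 1 / 2) (by norm_num)

theorem integrable_neg_mul_exp_neg_sq_div_two :
    Integrable fun t : ℝ => -t * exp (-t ^ 2 / 2) := by
  simpa [neg_div, div_eq_inv_mul] using integrable_mul_exp_neg_mul_sq (b := 1 / 2) (by norm_num)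

theorem integral_exp_neg_sq_div_two : ∫ t : ℝ, exp (-t ^ 2 / 2) = √(2 * π) := by
  simpa [neg_div, div_eq_inv_mul, mul_comm] using integral_gaussian (1 / 2)

theorem hasDerivAt_exp_neg_sq_div_two (x : ℝ) :
    HasDerivAt (fun t : ℝ => exp (-t ^ 2 / 2)) (-x * exp (-x ^ 2 / 2)) x := by
  have h : HasDerivAt (fun t : ℝ => -t ^ 2 / 2) (-x) x :=
    (((hasDerivAt_pow 2 x).neg).div_const 2).congr_deriv (by push_cast; ring)
  simpa [mul_comm] using h.exp

theorem integral_Iic_neg_mul_exp_neg_sq_div_two (x : ℝ) :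
    ∫ t in Iic x, -t * exp (-t ^ 2 / 2) = exp (-x ^ 2 / 2) := by
  have hderiv (t : ℝ) (_ : t ∈ Iic x) := hasDerivAt_exp_neg_sq_div_two t
  have hint := integrable_neg_mul_exp_neg_sq_div_two.integrableOn (s := Iic x)
  rw [integral_Iic_of_hasDerivAt_of_tendsto' hderiv hint
    (tendsto_zero_of_hasDerivAt_of_integrableOn_Iic hderiv hint
      integrable_exp_neg_sq_div_two.integrableOn), sub_zero]

theorem neg_mul_integral_Iic_exp_neg_sq_div_two_lt (x : ℝ) :
    -x * ∫ t in Iic x, exp (-t ^ 2 / 2) < exp (-x ^ 2 / 2) := by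
  have hint : Integrable fun t : ℝ => (x - t) * exp (-t ^ 2 / 2) := by
    refine ((integrable_exp_neg_sq_div_two.const_mul x).add
      integrable_neg_mul_exp_neg_sq_div_two).congr (ae_of_all _ fun t => ?_)
    simp only [Pi.add_apply]
    ring
  have hsplit : ∫ t in Iic x, (x - t) * exp (-t ^ 2 / 2)
      = x * (∫ t in Iic x, exp (-t ^ 2 / 2)) + exp (-x ^ 2 / 2) := by
    rw [← integral_Iic_neg_mul_exp_neg_sq_div_two, ← integral_const_mul, ← integral_add]
    · simp only [sub_eq_add_neg, add_mul, neg_mul]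
    · exact (integrable_exp_neg_sq_div_two.const_mul x).integrableOn
    · exact integrable_neg_mul_exp_neg_sq_div_two.integrableOn
  have hpos : 0 < ∫ t in Iio x, (x - t) * exp (-t ^ 2 / 2) :=
    setIntegral_pos_of_forall_pos measurableSet_Iio (by simp) hint.integrableOn
      fun t ht => mul_pos (sub_pos.2 ht) (exp_pos _)
  rw [← integral_Iic_eq_integral_Iio, hsplit] at hpos
  linarith

noncomputable def normalCDF (x : ℝ) : ℝ := (√(2 * π))⁻¹ * ∫ t in Iic x, exp (-t ^ 2 / 2)

theorem normalCDF_pos (x : ℝ) : 0 < normalCDF x :=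
  mul_pos (by positivity) <| setIntegral_pos_of_forall_pos measurableSet_Iic (by simp)
    integrable_exp_neg_sq_div_two.integrableOn fun t _ => exp_pos _

theorem hasDerivAt_normalCDF (x : ℝ) :
    HasDerivAt normalCDF ((√(2 * π))⁻¹ * exp (-x ^ 2 / 2)) x :=
  (hasDerivAt_integral_Iic integrable_exp_neg_sq_div_two (by fun_prop) x).const_mul _

theorem normalCDF_neg (x : ℝ) : normalCDF (-x) = 1 - normalCDF x := by
  have hreflect : ∫ t in Iic (-x), exp (-t ^ 2 / 2) = ∫ t in Ioi x, exp (-t ^ 2 / 2) := by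
    have h := integral_comp_neg_Iic (-x) fun t => exp (-t ^ 2 / 2)
    simp only [neg_sq, neg_neg] at h
    exact h
  have htotal : (∫ t in Iic x, exp (-t ^ 2 / 2)) + ∫ t in Ioi x, exp (-t ^ 2 / 2) = √(2 * π) := by
    rw [intervalIntegral.integral_Iic_add_Ioi integrable_exp_neg_sq_div_two.integrableOn
      integrable_exp_neg_sq_div_two.integrableOn, integral_exp_neg_sq_div_two]
  have hsqrt : √(2 * π) ≠ 0 := by positivity
  rw [normalCDF, normalCDF, hreflect, ← inv_mul_cancel₀ hsqrt, ← htotal]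
  ring

theorem strictConcaveOn_log_normalCDF : StrictConcaveOn ℝ univ fun x => log (normalCDF x) := by
  set c := (√(2 * π))⁻¹
  refine strictConcaveOn_univ_log_of_hasDerivAt normalCDF_pos hasDerivAt_normalCDF
    (fun x => (hasDerivAt_exp_neg_sq_div_two x).const_mul c) fun x => ?_
  have hcg : 0 < c ^ 2 * exp (-x ^ 2 / 2) := by positivity
  calc c * (-x * exp (-x ^ 2 / 2)) * normalCDF x
      = c ^ 2 * exp (-x ^ 2 / 2) * (-x * ∫ t in Iic x, exp (-t ^ 2 / 2)) := by
        rw [normalCDF]; ring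
    _ < c ^ 2 * exp (-x ^ 2 / 2) * exp (-x ^ 2 / 2) :=
        mul_lt_mul_of_pos_left (neg_mul_integral_Iic_exp_neg_sq_div_two_lt x) hcg
    _ = (c * exp (-x ^ 2 / 2)) ^ 2 := by ring

/-- For the standard normal cdf `Φ(x) = (1/√(2π)) ∫_{−∞}^x exp(−t²/2) dt`, both `log Φ`
and `log (1 − Φ)` are strictly concave on `ℝ`. -/
theorem normal_log_cdf_strictly_concave :
    StrictConcaveOn ℝ Set.univ
      (fun x : ℝ => Real.log
        ((Real.sqrt (2 * Real.pi))⁻¹ * ∫ t in Set.Iic x, Real.exp (-t ^ 2 / 2))) ∧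
    StrictConcaveOn ℝ Set.univ
      (fun x : ℝ => Real.log
        (1 - (Real.sqrt (2 * Real.pi))⁻¹ * ∫ t in Set.Iic x, Real.exp (-t ^ 2 / 2))) := by
  refine ⟨strictConcaveOn_log_normalCDF, ?_⟩
  have h := strictConcaveOn_log_normalCDF.comp_neg
  simp only [normalCDF_neg] at h
  exact h
end
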